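/- arXiv:1711.03585 — 2 statements merged into one kernel-verified Lean document; each statement's English description precedes it below -/
import Mathlib

section
/- Let c ∈ ℝ², r > 0, and α ≤ β, and let A = {c + r • u(θ) : θ ∈ [α, β]} be a circular arc; the associated circular segment is the convex hull conv(A). Let L = {p ∈ ℝ² : f(p) = c₀} be a line, where f : ℝ² → ℝ is a nonzero linear functional and c₀ ∈ ℝ. If L ∩ conv(A) is nonempty, then L ∩ A is nonempty; that is, any line meeting the circular segment contains at least one point of its arc boundary. -/
open Real Set

/-- The unit vector at angle `θ` in the Euclidean plane. -/
noncomputable def u (θ : ℝ) : EuclideanSpace ℝ (Fin 2) :=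
  (WithLp.equiv 2 (Fin 2 → ℝ)).symm ![Real.cos θ, Real.sin θ]

/-! A linear functional maps a preconnected set onto an interval, which is its own convex hull;
since linear maps commute with convex hulls, a level set of the functional meeting the convex
hull of a connected set (such as a circular arc) already meets the set. -/

lemma continuous_u : Continuous u := by
  unfold u
  refine (PiLp.continuous_toLp (p := 2) (β := fun _ : Fin 2 => ℝ)).comp ?_
  refine continuous_pi fun i => ?_
  fin_cases i <;> simp <;> fun_prop

lemma isPreconnected_arc (c : EuclideanSpace ℝ (Fin 2)) (r α β : ℝ) :
    IsPreconnected {p | ∃ θ ∈ Icc α β, p = c + r • u θ} := by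
  have harc : {p | ∃ θ ∈ Icc α β, p = c + r • u θ} = (fun θ => c + r • u θ) '' Icc α β := by
    ext p
    simp [eq_comm]
  rw [harc]
  exact isPreconnected_Icc.image _
    (continuous_const.add (continuous_const.fun_smul continuous_u)).continuousOn

lemma IsPreconnected.image_convexHull_eq {E : Type*} [AddCommGroup E] [Module ℝ E]
    [TopologicalSpace E] {s : Set E} (hs : IsPreconnected s) (f : E →ₗ[ℝ] ℝ)
    (hf : Continuous f) : f '' convexHull ℝ s = f '' s := by
  rw [f.image_convexHull]
  exact (hs.image f hf.continuousOn).ordConnected.convex.convexHull_eq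

lemma IsPreconnected.inter_nonempty_of_inter_convexHull_nonempty {E : Type*} [AddCommGroup E]
    [Module ℝ E] [TopologicalSpace E] {s : Set E} (hs : IsPreconnected s) (f : E →ₗ[ℝ] ℝ)
    (hf : Continuous f) (c₀ : ℝ) (h : ({p | f p = c₀} ∩ convexHull ℝ s).Nonempty) :
    ({p | f p = c₀} ∩ s).Nonempty := by
  obtain ⟨p, hp, hps⟩ := h
  obtain ⟨q, hqs, hq⟩ : c₀ ∈ f '' s := hs.image_convexHull_eq f hf ▸ ⟨p, hps, hp⟩
  exact ⟨q, hq, hqs⟩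

theorem line_inter_segment_meets_arc_general (c : EuclideanSpace ℝ (Fin 2)) (r : ℝ)
    (α β : ℝ)
    (A : Set (EuclideanSpace ℝ (Fin 2)))
    (hA : A = {p | ∃ θ ∈ Set.Icc α β, p = c + r • u θ})
    (f : EuclideanSpace ℝ (Fin 2) →ₗ[ℝ] ℝ) (c₀ : ℝ)
    (L : Set (EuclideanSpace ℝ (Fin 2)))
    (hL : L = {p | f p = c₀})
    (hne : (L ∩ convexHull ℝ A).Nonempty) :
    (L ∩ A).Nonempty := by
  subst hA hL
  exact (isPreconnected_arc c r α β).inter_nonempty_of_inter_convexHull_nonempty f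
    f.continuous_of_finiteDimensional c₀ hne

/-- Any line meeting the circular segment (convex hull of an arc) contains at least one
point of the arc itself. -/
theorem line_inter_segment_meets_arc (c : EuclideanSpace ℝ (Fin 2)) (r : ℝ) (hr : 0 < r)
    (α β : ℝ) (hαβ : α ≤ β)
    (A : Set (EuclideanSpace ℝ (Fin 2)))
    (hA : A = {p | ∃ θ ∈ Set.Icc α β, p = c + r • u θ})
    (f : EuclideanSpace ℝ (Fin 2) →ₗ[ℝ] ℝ) (hf : f ≠ 0) (c₀ : ℝ)
    (L : Set (EuclideanSpace ℝ (Fin 2)))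
    (hL : L = {p | f p = c₀})
    (hne : (L ∩ convexHull ℝ A).Nonempty) :
    (L ∩ A).Nonempty :=
  line_inter_segment_meets_arc_general c r α β A hA f c₀ L hL hne
end

section
/- Let D > 0, λ > 0, and L₁ > 0 be fixed, and define G(L₂) = (4D/λ)·( √(1 + ((L₁ + L₂)/(2D))²) − √(1 + ((L₁ − L₂)/(2D))²) ) for L₂ ∈ ℝ. Then G(L₂) tends to 4L₁/λ as L₂ → ∞; i.e., the space-bandwidth product of the symmetric parallel-planes geometry with unbounded scene tends to 4L₁/λ, an upper bound independent of the distance D. -/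
open Real Filter

/-! Since `2D·√(1 + (u/2D)²) = √((2D)² + u²)`, the quantity is `(2/λ)` times
`√(p + (L₂ + L₁)²) - √(p + (L₂ - L₁)²)` with `p = (2D)²`. Each square root is its argument
`L₂ ± L₁` up to an error `p / (√(p + y²) + y)` that vanishes at infinity, so the difference
tends to `2 L₁`. -/

theorem tendsto_sqrt_add_sq_sub_self_atTop (p : ℝ) :
    Tendsto (fun y : ℝ => √(p + y ^ 2) - y) atTop (nhds 0) := by
  have hden : Tendsto (fun y : ℝ => √(p + y ^ 2) + y) atTop atTop :=
    tendsto_atTop_add_left_of_le _ 0 (fun _ => sqrt_nonneg _) tendsto_id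
  have hquot : Tendsto (fun y : ℝ => p * (√(p + y ^ 2) + y)⁻¹) atTop (nhds 0) := by
    simpa using (hden.inv_tendsto_atTop).const_mul p
  refine hquot.congr' ?_
  filter_upwards [eventually_gt_atTop 0, eventually_ge_atTop √|p|] with y hy hyp
  have harg : 0 ≤ p + y ^ 2 := by
    have : |p| ≤ y ^ 2 := by
      simpa [sq_sqrt (abs_nonneg p)] using pow_le_pow_left₀ (sqrt_nonneg _) hyp 2
    linarith [neg_abs_le p]
  have hpos : 0 < √(p + y ^ 2) + y := by positivity
  rw [← div_eq_mul_inv, div_eq_iff hpos.ne']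
  nlinarith [sq_sqrt harg]

theorem tendsto_sqrt_add_sq_add_sub_sqrt_add_sq_sub (p c : ℝ) :
    Tendsto (fun x : ℝ => √(p + (x + c) ^ 2) - √(p + (x - c) ^ 2)) atTop (nhds (2 * c)) := by
  have hplus := (tendsto_sqrt_add_sq_sub_self_atTop p).comp
    (tendsto_atTop_add_const_right _ c tendsto_id)
  have hminus := (tendsto_sqrt_add_sq_sub_self_atTop p).comp
    (tendsto_atTop_add_const_right _ (-c) tendsto_id)
  convert (hplus.sub hminus).add_const (2 * c) using 2 with x
  · simp only [Function.comp_apply, id, ← sub_eq_add_neg]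
    ring
  · ring

theorem mul_sqrt_one_add_div_sq {k : ℝ} (hk : 0 < k) (u : ℝ) :
    k * √(1 + (u / k) ^ 2) = √(k ^ 2 + u ^ 2) := by
  rw [← sqrt_sq hk.le, ← sqrt_mul (sq_nonneg k), sqrt_sq hk.le]
  congr 1
  field_simp

theorem sbp_G1_unbounded_scene_general (D lam L₁ : ℝ) (hD : 0 < D) :
    Tendsto (fun L₂ : ℝ =>
        (4 * D / lam) * (Real.sqrt (1 + ((L₁ + L₂) / (2 * D)) ^ 2)
          - Real.sqrt (1 + ((L₁ - L₂) / (2 * D)) ^ 2)))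
      atTop (nhds (4 * L₁ / lam)) := by
  have h2D : 0 < 2 * D := by positivity
  convert (tendsto_sqrt_add_sq_add_sub_sqrt_add_sq_sub ((2 * D) ^ 2) L₁).const_mul (2 / lam)
    using 2 with L₂
  · rw [← mul_sqrt_one_add_div_sq h2D, ← mul_sqrt_one_add_div_sq h2D,
      add_comm L₂, ← neg_sub L₁ L₂, neg_div, neg_sq]
    ring
  · ring

/-- With unbounded scene, the space-bandwidth product of the symmetric parallel-planes
geometry tends to `4 L₁ / λ`, independently of the distance `D`. -/
theorem sbp_G1_unbounded_scene (D lam L₁ : ℝ) (hD : 0 < D) (hlam : 0 < lam)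
    (hL₁ : 0 < L₁) :
    Tendsto (fun L₂ : ℝ =>
        (4 * D / lam) * (Real.sqrt (1 + ((L₁ + L₂) / (2 * D)) ^ 2)
          - Real.sqrt (1 + ((L₁ - L₂) / (2 * D)) ^ 2)))
      atTop (nhds (4 * L₁ / lam)) :=
  sbp_G1_unbounded_scene_general D lam L₁ hD
end
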